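/- arXiv:1906.09822 — 3 statements merged into one kernel-verified Lean document; each statement's English description precedes it below -/
import Mathlib

section
/- A bibliometric index f (a function from citation vectors to nonnegative reals with f(⟨⟩) = 0) satisfies monotonicity, uniform citation, and uniform equivalence if and only if f(x) = rec(x) = max_i i·x_i for every citation vector x. -/
/-- A citation vector: a finite nonincreasing list of positive integers. -/
def CitVec (x : List ℕ) : Prop :=
  (∀ a ∈ x, 0 < a) ∧ List.Pairwise (· ≥ ·) x

/-- The rec-index: max over 1 ≤ i ≤ n of i·x_i (0 for the empty vector). -/
def recIdx (x : List ℕ) : ℕ :=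
  ((List.range x.length).map (fun i => (i + 1) * x.getD i 0)).foldr max 0

/-- Domination: u ⊑ x. -/
def Dom (u x : List ℕ) : Prop :=
  u.length ≤ x.length ∧ ∀ i < u.length, u.getD i 0 ≤ x.getD i 0

/-- Uniform: all entries equal. -/
def Uniform (x : List ℕ) : Prop := ∀ a ∈ x, ∀ b ∈ x, a = b

/-- x^[k]: add one citation to publication k (1-indexed; append a 1 if k = n+1). -/
def incr (x : List ℕ) (k : ℕ) : List ℕ :=
  if k ≤ x.length then x.set (k - 1) (x.getD (k - 1) 0 + 1) else x ++ [1]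

/-- k is the smallest index j with x_j = x_k (taking x_{n+1} = 0);
equivalently all earlier entries are strictly larger. -/
def MinIndex (x : List ℕ) (k : ℕ) : Prop :=
  1 ≤ k ∧ k ≤ x.length + 1 ∧ ∀ j, 1 ≤ j → j < k → x.getD (k - 1) 0 < x.getD (j - 1) 0

/-! Every uniform vector dominated by `x` has length `i ≤ |x|` and value at most `x_i`, so its sum is
at most `i · x_i ≤ rec x`; conversely the maximiser `i` of `i · x_i` gives the uniform vector
`(x_i, …, x_i)` of length `i`, dominated by `x` (as `x` is nonincreasing) with sum exactly `rec x`.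
Hence, under (UC) and (UE), `f x = ||u|| ≤ rec x` for the `u` of (UE), while (M) and (UC) give
`rec x = f (x_i, …, x_i) ≤ f x`. -/

lemma recIdx_eq_sup (x : List ℕ) :
    recIdx x = (Finset.range x.length).sup (fun i => (i + 1) * x.getD i 0) :=
  rfl

lemma le_recIdx {x : List ℕ} {i : ℕ} (hi : i < x.length) : (i + 1) * x.getD i 0 ≤ recIdx x := by
  rw [recIdx_eq_sup]
  exact Finset.le_sup (f := fun i => (i + 1) * x.getD i 0) (Finset.mem_range.2 hi)

lemma exists_recIdx_eq {x : List ℕ} (hx : x ≠ []) :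
    ∃ i < x.length, recIdx x = (i + 1) * x.getD i 0 := by
  have hne : (Finset.range x.length).Nonempty := by simpa [List.length_pos_iff] using hx
  obtain ⟨i, hi, heq⟩ := Finset.exists_mem_eq_sup _ hne (fun i => (i + 1) * x.getD i 0)
  exact ⟨i, Finset.mem_range.1 hi, heq⟩

lemma recIdx_mono {x y : List ℕ} (h : Dom x y) : recIdx x ≤ recIdx y := by
  rw [recIdx_eq_sup]
  refine Finset.sup_le fun i hi => ?_
  have hi : i < x.length := Finset.mem_range.1 hi
  calc (i + 1) * x.getD i 0 ≤ (i + 1) * y.getD i 0 := Nat.mul_le_mul_left _ (h.2 i hi)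
    _ ≤ recIdx y := le_recIdx (hi.trans_le h.1)

lemma recIdx_replicate (n c : ℕ) : recIdx (List.replicate n c) = n * c := by
  refine le_antisymm ?_ ?_
  · rw [recIdx_eq_sup]
    refine Finset.sup_le fun i hi => ?_
    have hi : i < n := by simpa using hi
    rw [List.getD_replicate _ hi]
    exact Nat.mul_le_mul_right c hi
  · cases n with
    | zero => simp
    | succ m =>
      simpa [List.getD_replicate] using le_recIdx (x := List.replicate (m + 1) c) (i := m) (by simp)

lemma Uniform.exists_eq_replicate {x : List ℕ} (hx : Uniform x) :
    ∃ c, x = List.replicate x.length c := by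
  cases x with
  | nil => exact ⟨0, rfl⟩
  | cons a t => exact ⟨a, List.eq_replicate_iff.2 ⟨rfl, fun b hb => hx b hb a List.mem_cons_self⟩⟩

lemma Uniform.recIdx_eq_sum {x : List ℕ} (hx : Uniform x) : recIdx x = x.sum := by
  obtain ⟨c, hc⟩ := hx.exists_eq_replicate
  rw [hc, recIdx_replicate, List.sum_replicate, smul_eq_mul]

lemma uniform_replicate (n c : ℕ) : Uniform (List.replicate n c) := by
  intro a ha b hb
  rw [List.eq_of_mem_replicate ha, List.eq_of_mem_replicate hb]

lemma citVec_replicate (n : ℕ) {c : ℕ} (hc : 0 < c) : CitVec (List.replicate n c) :=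
  ⟨fun _ ha => List.eq_of_mem_replicate ha ▸ hc, List.pairwise_replicate.2 (Or.inr le_rfl)⟩

lemma dom_replicate_getD {x : List ℕ} (hx : List.Pairwise (· ≥ ·) x) {i : ℕ} (hi : i < x.length) :
    Dom (List.replicate (i + 1) (x.getD i 0)) x := by
  refine ⟨by simpa using hi, fun j hj => ?_⟩
  have hj : j < i + 1 := by simpa using hj
  rw [List.getD_replicate _ hj, List.getD_eq_getElem _ _ hi,
    List.getD_eq_getElem _ _ (by omega)]
  rcases (Nat.lt_succ_iff.1 hj).lt_or_eq with hji | rfl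
  · exact List.pairwise_iff_getElem.1 hx j i _ hi hji
  · exact le_rfl

lemma CitVec.exists_uniform_dom_sum_eq_recIdx {x : List ℕ} (hx : CitVec x) :
    ∃ u, CitVec u ∧ Uniform u ∧ Dom u x ∧ u.sum = recIdx x := by
  rcases eq_or_ne x [] with rfl | hne
  · exact ⟨[], hx, uniform_replicate 0 0, ⟨le_rfl, by simp⟩, rfl⟩
  obtain ⟨i, hi, hrec⟩ := exists_recIdx_eq hne
  have hpos : 0 < x.getD i 0 := by
    rw [List.getD_eq_getElem _ _ hi]
    exact hx.1 _ (List.getElem_mem hi)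
  refine ⟨_, citVec_replicate (i + 1) hpos, uniform_replicate _ _, dom_replicate_getD hx.2 hi, ?_⟩
  rw [hrec, List.sum_replicate, smul_eq_mul]

theorem rec_characterisation_general (f : List ℕ → ℝ) :
    ((∀ x y, CitVec x → CitVec y → Dom x y → f x ≤ f y) ∧
     (∀ x, CitVec x → Uniform x → f x = x.sum) ∧
     (∀ x, CitVec x → ∃ u, CitVec u ∧ Uniform u ∧ Dom u x ∧ f x = f u)) ↔
    (∀ x, CitVec x → f x = recIdx x) := by
  refine ⟨fun ⟨hM, hUC, hUE⟩ x hx => le_antisymm ?_ ?_, fun hrec => ⟨?_, ?_, ?_⟩⟩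
  · obtain ⟨u, hu, hu_unif, hux, hfu⟩ := hUE x hx
    calc f x = u.sum := hfu.trans (hUC u hu hu_unif)
      _ = recIdx u := by rw [hu_unif.recIdx_eq_sum]
      _ ≤ recIdx x := by exact_mod_cast recIdx_mono hux
  · obtain ⟨u, hu, hu_unif, hux, hsum⟩ := hx.exists_uniform_dom_sum_eq_recIdx
    calc (recIdx x : ℝ) = u.sum := by rw [hsum]
      _ = f u := (hUC u hu hu_unif).symm
      _ ≤ f x := hM u x hu hx hux
  · intro x y hx hy hxy
    rw [hrec x hx, hrec y hy]
    exact_mod_cast recIdx_mono hxy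
  · intro x hx hx_unif
    rw [hrec x hx, hx_unif.recIdx_eq_sum]
  · intro x hx
    obtain ⟨u, hu, hu_unif, hux, hsum⟩ := hx.exists_uniform_dom_sum_eq_recIdx
    exact ⟨u, hu, hu_unif, hux, by rw [hrec x hx, hrec u hu, hu_unif.recIdx_eq_sum, hsum]⟩

theorem rec_characterisation (f : List ℕ → ℝ)
    (hnonneg : ∀ x, CitVec x → 0 ≤ f x) (hbase : f [] = 0) :
    ((∀ x y, CitVec x → CitVec y → Dom x y → f x ≤ f y) ∧
     (∀ x, CitVec x → Uniform x → f x = x.sum) ∧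
     (∀ x, CitVec x → ∃ u, CitVec u ∧ Uniform u ∧ Dom u x ∧ f x = f u)) ↔
    (∀ x, CitVec x → f x = recIdx x) :=
  rec_characterisation_general f
end

section
/- The rec-index is self-conjugate: if p is the conjugate partition of the citation vector x (so p has length x₁ and p_i is the number of indices j with x_j ≥ i), then rec(p) = rec(x). -/
/-- The conjugate partition: p has length x₁ and p_i = #{ j : x_j ≥ i }. -/
def conj (x : List ℕ) : List ℕ :=
  (List.range (x.headD 0)).map (fun i => x.countP (fun a => i + 1 ≤ a))

/-!
`(i + 1) * x_i` is the area of the rectangle of width `i + 1` and height `x_i` sitting in the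
corner of the Young diagram of `x`, so `rec x` is the largest area of such a corner rectangle.
Transposing the diagram swaps the two sides of these rectangles, hence `rec p = rec x`. On lists
this is the Galois correspondence `v ≤ x_j ↔ j < #{k | v ≤ x_k} = p_(v-1)` for nonincreasing `x`
and `v > 0`.
-/

namespace List

variable {x : List ℕ}

theorem le_headD_of_mem (hx : x.Pairwise (· ≥ ·)) {b : ℕ} (hb : b ∈ x) : b ≤ x.headD 0 := by
  rcases x with _ | ⟨a, t⟩
  · simp at hb
  · exact (mem_cons.1 hb).elim Eq.le ((pairwise_cons.1 hx).1 b)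

theorem le_getD_iff_lt_countP (hx : x.Pairwise (· ≥ ·)) {v : ℕ} (hv : 0 < v) (j : ℕ) :
    v ≤ x.getD j 0 ↔ j < x.countP (v ≤ ·) := by
  induction x generalizing j with
  | nil => simp only [getD_nil, countP_nil]; omega
  | cons a t ih =>
    have ht := (pairwise_cons.1 hx).2
    by_cases hva : v ≤ a
    · rcases j with _ | j
      · simp [hva]
      · simp only [getD_cons_succ, countP_cons, hva, decide_true, if_true, ih ht j]
        omega
    · have hsmall : ∀ b ∈ a :: t, b < v := fun b hb =>
        (le_headD_of_mem hx hb).trans_lt (not_le.1 hva)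
      have hcount : (a :: t).countP (v ≤ ·) = 0 :=
        countP_eq_zero.2 fun b hb => by simpa using hsmall b hb
      have htcount : t.countP (v ≤ ·) = 0 :=
        countP_eq_zero.2 fun b hb => by simpa using hsmall b (mem_cons_of_mem a hb)
      rcases j with _ | j
      · simpa [hcount] using hva
      · rw [getD_cons_succ, ih ht j, hcount, htcount]
        omega

end List

open List

theorem recIdx_le_iff {x : List ℕ} {m : ℕ} :
    recIdx x ≤ m ↔ ∀ i, (i + 1) * x.getD i 0 ≤ m := by
  refine ⟨fun h i => ?_, fun h => List.max_le_of_forall_le _ _ ?_⟩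
  · rcases lt_or_ge i x.length with hi | hi
    · exact (List.le_max_of_le (mem_map.2 ⟨i, mem_range.2 hi, rfl⟩) le_rfl).trans h
    · rw [getD_eq_default _ _ hi, Nat.mul_zero]
      exact Nat.zero_le m
  · simp only [mem_map, mem_range]
    rintro _ ⟨i, -, rfl⟩
    exact h i

theorem mul_le_recIdx {x : List ℕ} {i b : ℕ} (h : b ≤ x.getD i 0) :
    (i + 1) * b ≤ recIdx x :=
  (Nat.mul_le_mul_left _ h).trans (recIdx_le_iff.1 le_rfl i)

theorem conj_getD {x : List ℕ} (hx : x.Pairwise (· ≥ ·)) (i : ℕ) :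
    (conj x).getD i 0 = x.countP (i + 1 ≤ ·) := by
  rcases lt_or_ge i (x.headD 0) with hi | hi
  · rw [conj, getD_eq_getElem _ _ (by simpa using hi)]
    simp
  · rw [getD_eq_default _ _ (by simpa [conj] using hi), eq_comm, countP_eq_zero]
    intro b hb
    simpa using (le_headD_of_mem hx hb).trans hi

theorem mul_countP_le_recIdx {x : List ℕ} (hx : x.Pairwise (· ≥ ·)) (v : ℕ) :
    v * x.countP (v ≤ ·) ≤ recIdx x := by
  rcases Nat.eq_zero_or_pos v with rfl | hv
  · simp
  cases hc : x.countP (v ≤ ·) with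
  | zero => simp
  | succ j =>
    rw [Nat.mul_comm]
    exact mul_le_recIdx ((le_getD_iff_lt_countP hx hv j).2 (by omega))

theorem rec_self_conjugate (x : List ℕ) (hx : CitVec x) :
    recIdx (conj x) = recIdx x := by
  have hsort := hx.2
  refine le_antisymm (recIdx_le_iff.2 fun i => ?_) (recIdx_le_iff.2 fun j => ?_)
  · rw [conj_getD hsort]
    exact mul_countP_le_recIdx hsort (i + 1)
  · cases hv : x.getD j 0 with
    | zero => simp
    | succ w =>
      have hcount : j + 1 ≤ (conj x).getD w 0 := by
        rw [conj_getD hsort, ← hv]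
        exact (le_getD_iff_lt_countP hsort (by omega) j).1 le_rfl
      rw [Nat.mul_comm]
      exact mul_le_recIdx hcount
end

section
/- Adding a single citation increases the χ-index by at most 1: if x^[k] is obtained from the citation vector x by adding one citation to publication k (keeping the vector nonincreasing), then χ(x^[k]) ≤ χ(x) + 1, where χ(x) = √(rec(x)). -/
lemma mem_le_foldr_max (l : List ℕ) (a : ℕ) (h : a ∈ l) : a ≤ l.foldr max 0 := by
  induction l with
  | nil => simp at h
  | cons b t ih =>
    rcases List.mem_cons.mp h with h | h
    · subst h; exact le_max_left _ _
    · exact le_trans (ih h) (le_max_right _ _)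

lemma foldr_max_le (l : List ℕ) (m : ℕ) (h : ∀ a ∈ l, a ≤ m) : l.foldr max 0 ≤ m := by
  induction l with
  | nil => simp
  | cons b t ih =>
    simp only [List.foldr, max_le_iff]
    exact ⟨h b (List.mem_cons_self), ih fun a ha => h a (List.mem_cons_of_mem _ ha)⟩

lemma term_le_recIdx (x : List ℕ) (i : ℕ) (hi : i < x.length) :
    (i + 1) * x.getD i 0 ≤ recIdx x := by
  apply mem_le_foldr_max
  simp only [List.mem_map, List.mem_range]
  exact ⟨i, hi, rfl⟩

lemma recIdx_le (x : List ℕ) (m : ℕ) (h : ∀ i < x.length, (i + 1) * x.getD i 0 ≤ m) :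
    recIdx x ≤ m := by
  apply foldr_max_le
  intro a ha
  simp only [List.mem_map, List.mem_range] at ha
  obtain ⟨i, hi, rfl⟩ := ha
  exact h i hi

lemma recIdx_incr_le (x : List ℕ) (k : ℕ) (hk1 : 1 ≤ k) (hk2 : k ≤ x.length + 1) :
    recIdx (incr x k) ≤ max (recIdx x) (k * (x.getD (k - 1) 0 + 1)) := by
  unfold incr
  by_cases h : k ≤ x.length
  · rw [if_pos h]
    apply recIdx_le
    intro i hi
    rw [List.length_set] at hi
    rw [List.getD_eq_getElem?_getD, List.getElem?_set]
    by_cases hik : k - 1 = i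
    · subst hik
      rw [if_pos rfl, if_pos (by omega)]
      simp only [Option.getD_some]
      have : k - 1 + 1 = k := by omega
      rw [this]
      exact le_max_right _ _
    · rw [if_neg hik, ← List.getD_eq_getElem?_getD]
      exact le_trans (term_le_recIdx x i hi) (le_max_left _ _)
  · rw [if_neg h]
    have hk : k = x.length + 1 := by omega
    apply recIdx_le
    intro i hi
    rw [List.length_append, List.length_singleton] at hi
    by_cases hix : i < x.length
    · rw [List.getD_append _ _ _ _ hix]
      exact le_trans (term_le_recIdx x i hix) (le_max_left _ _)
    · have : i = x.length := by omega
      subst this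
      have h1 : (x ++ [1]).getD x.length 0 = 1 := by
        rw [List.getD_eq_getElem?_getD, List.getElem?_append_right le_rfl]
        simp
      have h2 : x.getD (k - 1) 0 = 0 := by
        rw [List.getD_eq_getElem?_getD, List.getElem?_eq_none (by omega)]
        rfl
      rw [h1, h2, hk]
      simp [le_max_right]

lemma aux_real (c r M : ℕ) (h1 : M ≤ r + c) (h2 : c * (c - 1) ≤ r) :
    (M : ℝ) ≤ (Real.sqrt r + 1) ^ 2 := by
  have hrnn : (0:ℝ) ≤ Real.sqrt r := Real.sqrt_nonneg _
  have hrsq : (r : ℝ) = Real.sqrt r ^ 2 := (Real.sq_sqrt (by positivity)).symm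
  rcases Nat.eq_zero_or_pos c with hc0 | hc1
  · subst hc0
    have : (M : ℝ) ≤ (r : ℝ) := by exact_mod_cast (by omega : M ≤ r)
    nlinarith
  · obtain ⟨c', rfl⟩ : ∃ c', c = c' + 1 := ⟨c - 1, by omega⟩
    have h2' : c' * c' ≤ r := by
      have : c' * c' ≤ (c' + 1) * ((c' + 1) - 1) := by simp; nlinarith
      omega
    have hcs : (c' : ℝ) ≤ Real.sqrt r := by
      have : Real.sqrt ((c':ℝ)^2) ≤ Real.sqrt r := by
        apply Real.sqrt_le_sqrt
        have : ((c' * c' : ℕ) : ℝ) ≤ (r : ℝ) := by exact_mod_cast h2'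
        push_cast at this ⊢
        nlinarith
      rwa [Real.sqrt_sq (by positivity)] at this
    have hM : (M : ℝ) ≤ (r : ℝ) + c' + 1 := by
      have : (M : ℝ) ≤ ((r + (c' + 1) : ℕ) : ℝ) := by exact_mod_cast h1
      push_cast at this
      linarith
    nlinarith

lemma aux_nat (k b r : ℕ) (hk : 1 ≤ k) (hb : 1 ≤ b)
    (hB : (k - 1) * b ≤ r) (hC : k * (b - 1) ≤ r) :
    (k * b : ℝ) ≤ (Real.sqrt r + 1) ^ 2 := by
  obtain ⟨k', rfl⟩ : ∃ k', k = k' + 1 := ⟨k - 1, by omega⟩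
  obtain ⟨b', rfl⟩ : ∃ b', b = b' + 1 := ⟨b - 1, by omega⟩
  have hB' : k' * (b' + 1) ≤ r := by simpa using hB
  have hC' : (k' + 1) * b' ≤ r := by simpa using hC
  rcases le_total k' b' with h | h
  · have h1 : (k' + 1) * (b' + 1) ≤ r + (k' + 1) := by nlinarith
    have h2 : (k' + 1) * ((k' + 1) - 1) ≤ r := by simp; nlinarith
    have := aux_real (k' + 1) r ((k' + 1) * (b' + 1)) h1 h2
    exact_mod_cast this
  · have h1 : (k' + 1) * (b' + 1) ≤ r + (b' + 1) := by nlinarith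
    have h2 : (b' + 1) * ((b' + 1) - 1) ≤ r := by simp; nlinarith
    have := aux_real (b' + 1) r ((k' + 1) * (b' + 1)) h1 h2
    exact_mod_cast this

theorem chi_increase_at_most_one (x : List ℕ) (k : ℕ) (hx : CitVec x)
    (hk : MinIndex x k) :
    Real.sqrt (recIdx (incr x k)) ≤ Real.sqrt (recIdx x) + 1 := by
  obtain ⟨hk1, hk2, hmin⟩ := hk
  have hC : k * (x.getD (k - 1) 0 + 1 - 1) ≤ recIdx x := by
    by_cases h : k ≤ x.length
    · have := term_le_recIdx x (k - 1) (by omega)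
      have hkk : k - 1 + 1 = k := by omega
      rw [hkk] at this
      simpa using this
    · have h0 : x.getD (k - 1) 0 = 0 := by
        rw [List.getD_eq_getElem?_getD, List.getElem?_eq_none (by omega)]
        rfl
      have hz : x.getD (k - 1) 0 + 1 - 1 = 0 := by omega
      rw [hz, Nat.mul_zero]
      exact Nat.zero_le _
  have hB : (k - 1) * (x.getD (k - 1) 0 + 1) ≤ recIdx x := by
    rcases Nat.lt_or_ge k 2 with h2 | h2
    · interval_cases k <;> simp
    · have hlt := hmin (k - 1) (by omega) (by omega)
      have hk2' : k - 1 - 1 = k - 2 := by omega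
      rw [hk2'] at hlt
      have hterm := term_le_recIdx x (k - 2) (by omega)
      have heq : (k - 2) + 1 = k - 1 := by omega
      rw [heq] at hterm
      calc (k - 1) * (x.getD (k - 1) 0 + 1) ≤ (k - 1) * x.getD (k - 2) 0 :=
            Nat.mul_le_mul_left _ (by omega)
        _ ≤ recIdx x := hterm
  have hM : ((k * (x.getD (k - 1) 0 + 1) : ℕ) : ℝ) ≤ (Real.sqrt (recIdx x) + 1) ^ 2 := by
    have := aux_nat k (x.getD (k - 1) 0 + 1) (recIdx x) hk1 (by omega) hB hC
    exact_mod_cast this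
  have hr2 : ((recIdx x : ℕ) : ℝ) ≤ (Real.sqrt (recIdx x) + 1) ^ 2 := by
    have h := (Real.sq_sqrt (by positivity : (0:ℝ) ≤ ((recIdx x : ℕ) : ℝ))).symm
    nlinarith [Real.sqrt_nonneg ((recIdx x : ℕ) : ℝ)]
  have hmax := recIdx_incr_le x k hk1 hk2
  have hle : ((recIdx (incr x k) : ℕ) : ℝ) ≤ (Real.sqrt (recIdx x) + 1) ^ 2 := by
    have h1 : ((recIdx (incr x k) : ℕ) : ℝ)
        ≤ ((max (recIdx x) (k * (x.getD (k - 1) 0 + 1)) : ℕ) : ℝ) := by exact_mod_cast hmax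
    refine le_trans h1 ?_
    rcases max_cases (recIdx x) (k * (x.getD (k - 1) 0 + 1)) with ⟨heq, _⟩ | ⟨heq, _⟩ <;>
      rw [heq]
    · exact hr2
    · exact hM
  calc Real.sqrt (recIdx (incr x k)) ≤ Real.sqrt ((Real.sqrt (recIdx x) + 1) ^ 2) :=
        Real.sqrt_le_sqrt hle
    _ = Real.sqrt (recIdx x) + 1 :=
        Real.sqrt_sq (by positivity)
end
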